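/- arXiv:math/0304445 — 4 statements merged into one kernel-verified Lean document; each statement's English description precedes it below -/
import Mathlib

section
/- Over a field k of characteristic zero, the de Rham cohomology of the exponential module D e^{xy} on the affine plane, computed along the fiber direction, recovers local cohomology at the origin of the line: the complex k[x,y] →^{∂_y + x} k[x,y] has H^0 = 0 and H^1 ≅ k[x,x^{-1}]/k[x] as k[x]-modules, where x acts on the cokernel of ∂_y + x. -/
set_option linter.unusedSectionVars false

open Polynomial

noncomputable section DworkAux

variable (k : Type) [Field k] [CharZero k]

/-- The operator ∂_y + x on k[x][y]. -/
def dworkT : Polynomial (Polynomial k) →ₗ[Polynomial k] Polynomial (Polynomial k) :=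
  (Polynomial.derivative : Polynomial (Polynomial k) →ₗ[Polynomial k] Polynomial (Polynomial k))
    + LinearMap.mulLeft (Polynomial k) (C (X : Polynomial k))

lemma dworkT_apply (p : Polynomial (Polynomial k)) :
    dworkT k p = derivative p + C X * p := rfl

lemma dworkT_coeff (p : Polynomial (Polynomial k)) (n : ℕ) :
    (dworkT k p).coeff n = p.coeff (n+1) * ((n : Polynomial k)+1) + X * p.coeff n := by
  simp [dworkT_apply, coeff_derivative]

lemma dworkT_ker : LinearMap.ker (dworkT k) = ⊥ := by
  rw [LinearMap.ker_eq_bot']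
  intro p hp
  by_contra hne
  have h : (dworkT k p).coeff p.natDegree = 0 := by rw [hp]; simp
  rw [dworkT_coeff, coeff_eq_zero_of_natDegree_lt (lt_add_one _), zero_mul, zero_add] at h
  have : p.coeff p.natDegree = 0 := by
    rcases mul_eq_zero.mp h with h' | h'
    · exact absurd h' X_ne_zero
    · exact h'
  exact hne (leadingCoeff_eq_zero.mp this)


/-- 1/x in the localization. -/
def dworkU : Localization.Away (X : Polynomial k) :=
  IsLocalization.Away.invSelf (S := Localization.Away (X : Polynomial k)) (X : Polynomial k)

lemma dworkU_mul :
    algebraMap (Polynomial k) (Localization.Away (X : Polynomial k)) X * dworkU k = 1 :=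
  IsLocalization.Away.mul_invSelf (X : Polynomial k)

/-- c n = (-1)^n n! / x^(n+1). -/
def dworkC (n : ℕ) : Localization.Away (X : Polynomial k) :=
  algebraMap (Polynomial k) _ ((-1 : Polynomial k)^n * (n.factorial : Polynomial k))
    * dworkU k ^ (n+1)

lemma X_mul_dworkC_zero :
    algebraMap (Polynomial k) (Localization.Away (X : Polynomial k)) X * dworkC k 0 = 1 := by
  have h := dworkU_mul k
  rw [dworkC]
  simp only [pow_zero, Nat.factorial_zero, Nat.cast_one, mul_one, map_one, one_mul, pow_one,
    zero_add]
  exact h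

lemma X_mul_dworkC_succ (n : ℕ) :
    algebraMap (Polynomial k) (Localization.Away (X : Polynomial k)) X * dworkC k (n+1)
      = algebraMap (Polynomial k) _ (-((n : Polynomial k)+1)) * dworkC k n := by
  have key : algebraMap (Polynomial k) (Localization.Away (X : Polynomial k)) X *
      dworkU k ^ (n+2) = dworkU k ^ (n+1) := by
    calc algebraMap (Polynomial k) (Localization.Away (X : Polynomial k)) X * dworkU k ^ (n+2)
        = (algebraMap (Polynomial k) _ X * dworkU k) * dworkU k ^ (n+1) := by ring
      _ = dworkU k ^ (n+1) := by rw [dworkU_mul, one_mul]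
  calc algebraMap (Polynomial k) (Localization.Away (X : Polynomial k)) X * dworkC k (n+1)
      = algebraMap (Polynomial k) _ ((-1 : Polynomial k)^(n+1) * ((n+1).factorial : _))
          * (algebraMap (Polynomial k) _ X * dworkU k ^ (n+2)) := by rw [dworkC]; ring
    _ = algebraMap (Polynomial k) _ ((-1 : Polynomial k)^(n+1) * ((n+1).factorial : _))
          * dworkU k ^ (n+1) := by rw [key]
    _ = algebraMap (Polynomial k) _ (-((n : Polynomial k)+1)) * dworkC k n := by
        rw [dworkC, ← mul_assoc, ← map_mul]
        congr 1
        push_cast [Nat.factorial_succ]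
        ring

/-- The map φ₀ : k[x][y] → k[x,1/x], y^n ↦ c n. -/
def dworkPhi : Polynomial (Polynomial k) →ₗ[Polynomial k] Localization.Away (X : Polynomial k) :=
  Polynomial.lsum fun n => LinearMap.toSpanSingleton _ _ (dworkC k n)

lemma dworkPhi_monomial (n : ℕ) (r : Polynomial k) :
    dworkPhi k (monomial n r) = r • dworkC k n := by
  simp [dworkPhi, Polynomial.lsum_apply, Polynomial.sum_monomial_index,
    LinearMap.toSpanSingleton_apply]

lemma phi_T_mem (p : Polynomial (Polynomial k)) :
    dworkPhi k (dworkT k p)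
      ∈ LinearMap.range (Algebra.linearMap (Polynomial k)
          (Localization.Away (X : Polynomial k))) := by
  induction p using Polynomial.induction_on' with
  | add p q hp hq => rw [map_add, map_add]; exact add_mem hp hq
  | monomial n r =>
    cases n with
    | zero =>
      have h1 : dworkT k (monomial 0 r) = monomial 0 (X * r) := by
        rw [dworkT_apply]
        simp [derivative_monomial, C_mul_monomial]
      have h2 : ((X * r) • dworkC k 0 : Localization.Away (X : Polynomial k))
          = algebraMap (Polynomial k) (Localization.Away (X : Polynomial k)) r := by
        rw [Algebra.smul_def, map_mul, mul_comm (algebraMap (Polynomial k) _ X), mul_assoc,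
          X_mul_dworkC_zero, mul_one]
      rw [h1, dworkPhi_monomial, h2]
      exact ⟨r, rfl⟩
    | succ n =>
      have h1 : dworkT k (monomial (n+1) r)
          = monomial n (r * (((n+1 : ℕ)) : Polynomial k)) + monomial (n+1) (X * r) := by
        rw [dworkT_apply, derivative_monomial, C_mul_monomial, Nat.add_sub_cancel]
      rw [h1, map_add, dworkPhi_monomial, dworkPhi_monomial]
      have h2 : ((X * r) • dworkC k (n+1) : Localization.Away (X : Polynomial k))
          = r • (algebraMap (Polynomial k) (Localization.Away (X : Polynomial k)) X
              * dworkC k (n+1)) := by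
        rw [Algebra.smul_def, Algebra.smul_def, map_mul]; ring
      rw [h2, X_mul_dworkC_succ]
      have h3 : (r * (((n+1 : ℕ)) : Polynomial k)) • dworkC k n
          + r • (algebraMap (Polynomial k) (Localization.Away (X : Polynomial k))
              (-((n : Polynomial k)+1)) * dworkC k n) = 0 := by
        simp only [Algebra.smul_def, map_mul, map_neg]
        push_cast
        ring
      rw [h3]
      exact zero_mem _


lemma phi_surj : Function.Surjective
    ⇑((LinearMap.range (Algebra.linearMap (Polynomial k)
        (Localization.Away (X : Polynomial k)))).mkQ.comp (dworkPhi k)) := by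
  intro y
  obtain ⟨z, rfl⟩ := Submodule.mkQ_surjective _ y
  obtain ⟨⟨r, m⟩, spec⟩ : ∃ p : Polynomial k × ℕ,
      z * algebraMap (Polynomial k) (Localization.Away (X : Polynomial k)) (X ^ p.2)
        = algebraMap (Polynomial k) _ p.1 :=
    ⟨IsLocalization.Away.sec (X : Polynomial k) z,
      IsLocalization.Away.sec_spec (X : Polynomial k) z⟩
  have hz : z = algebraMap (Polynomial k) (Localization.Away (X : Polynomial k)) r
      * dworkU k ^ m := by
    calc z = z * (algebraMap (Polynomial k) (Localization.Away (X : Polynomial k)) X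
            * dworkU k) ^ m := by rw [dworkU_mul, one_pow, mul_one]
      _ = (z * algebraMap (Polynomial k) _ (X ^ m)) * dworkU k ^ m := by
          rw [mul_pow, map_pow]; ring
      _ = algebraMap (Polynomial k) _ r * dworkU k ^ m := by rw [spec]
  clear spec
  cases m with
  | zero =>
    refine ⟨0, ?_⟩
    rw [pow_zero, mul_one] at hz
    rw [LinearMap.comp_apply, map_zero, map_zero]
    symm
    rw [Submodule.mkQ_apply, Submodule.Quotient.mk_eq_zero]
    exact ⟨r, hz.symm⟩
  | succ n =>
    have hfac : ((n.factorial : k)) ≠ 0 := Nat.cast_ne_zero.mpr n.factorial_ne_zero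
    have hwv : (C ((-1:k)^n * ((n.factorial : k))⁻¹) : Polynomial k)
        * ((-1 : Polynomial k)^n * (n.factorial : Polynomial k)) = 1 := by
      have h1 : ((-1 : Polynomial k)^n * (n.factorial : Polynomial k))
          = C ((-1:k)^n * (n.factorial : k)) := by
        simp [map_mul, map_pow]
      rw [h1, ← map_mul, ← map_one (C : k →+* Polynomial k)]
      congr 1
      rw [mul_mul_mul_comm, ← mul_pow, inv_mul_cancel₀ hfac]
      norm_num
    refine ⟨monomial n (r * C ((-1:k)^n * ((n.factorial : k))⁻¹)), ?_⟩
    have key : (r * C ((-1:k)^n * ((n.factorial : k))⁻¹)) • dworkC k n = z := by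
      rw [Algebra.smul_def, dworkC, ← mul_assoc, ← map_mul, mul_assoc, hwv, mul_one, hz]
    rw [LinearMap.comp_apply, dworkPhi_monomial, key]


lemma normal_form_monomial :
    ∀ n (r : Polynomial k), ∃ q b, (monomial n r : Polynomial (Polynomial k))
      = dworkT k q + Polynomial.map (C : k →+* Polynomial k) b := by
  intro n
  induction n with
  | zero =>
    intro r
    refine ⟨C (divX r), C (r.coeff 0), ?_⟩
    rw [dworkT_apply, derivative_C, zero_add, Polynomial.map_C, ← C_mul, ← C_add,
      X_mul_divX_add, monomial_zero_left]
  | succ n ih =>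
    intro r
    obtain ⟨q', b', hb'⟩ := ih (divX r * (((n+1 : ℕ)) : Polynomial k))
    refine ⟨monomial (n+1) (divX r) - q', monomial (n+1) (r.coeff 0) - b', ?_⟩
    have hT : dworkT k (monomial (n+1) (divX r))
        = monomial n (divX r * (((n+1:ℕ)) : Polynomial k)) + monomial (n+1) (X * divX r) := by
      rw [dworkT_apply, derivative_monomial, C_mul_monomial, Nat.add_sub_cancel]
    have hmono : (monomial (n+1)) (X * divX r) + (monomial (n+1)) (C (r.coeff 0))
        = (monomial (n+1) r : Polynomial (Polynomial k)) := by
      rw [← map_add, X_mul_divX_add]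
    rw [map_sub, hT, hb', Polynomial.map_sub, Polynomial.map_monomial, ← hmono]
    abel

lemma normal_form (p : Polynomial (Polynomial k)) :
    ∃ q b, p = dworkT k q + Polynomial.map (C : k →+* Polynomial k) b := by
  induction p using Polynomial.induction_on' with
  | add p q hp hq =>
    obtain ⟨qp, bp, hp⟩ := hp
    obtain ⟨qq, bq, hq⟩ := hq
    refine ⟨qp + qq, bp + bq, ?_⟩
    rw [hp, hq, map_add, Polynomial.map_add]
    abel
  | monomial n r => exact normal_form_monomial k n r

lemma algebraMap_loc_injective :
    Function.Injective (algebraMap (Polynomial k) (Localization.Away (X : Polynomial k))) :=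
  IsLocalization.injective _ (powers_le_nonZeroDivisors_of_noZeroDivisors X_ne_zero)

lemma Xpow_mul_c (n N : ℕ) (h : n ≤ N) :
    algebraMap (Polynomial k) (Localization.Away (X : Polynomial k)) (X^(N+1)) * dworkC k n
      = algebraMap (Polynomial k) _
          ((-1 : Polynomial k)^n * (n.factorial : Polynomial k) * X^(N-n)) := by
  have hsplit : (X : Polynomial k)^(N+1) = X^(N-n) * X^(n+1) := by
    rw [← pow_add]
    congr 1
    omega
  rw [dworkC, hsplit]
  calc algebraMap (Polynomial k) (Localization.Away (X : Polynomial k)) (X^(N-n) * X^(n+1))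
        * (algebraMap (Polynomial k) _ ((-1 : Polynomial k)^n * (n.factorial : Polynomial k))
            * dworkU k ^ (n+1))
      = algebraMap (Polynomial k) _ ((-1 : Polynomial k)^n * (n.factorial : Polynomial k)
            * X^(N-n))
          * (algebraMap (Polynomial k) _ X * dworkU k) ^ (n+1) := by
        simp only [map_mul, map_pow, mul_pow]
        ring
    _ = _ := by rw [dworkU_mul, one_pow, mul_one]

lemma phi_constpoly (b : Polynomial k)
    (h : dworkPhi k (Polynomial.map (C : k →+* Polynomial k) b)
      ∈ LinearMap.range (Algebra.linearMap (Polynomial k)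
          (Localization.Away (X : Polynomial k)))) : b = 0 := by
  set N := b.natDegree with hN
  have hexp : dworkPhi k (Polynomial.map (C : k →+* Polynomial k) b)
      = ∑ n ∈ Finset.range (N+1), (C (b.coeff n) : Polynomial k) • dworkC k n := by
    rw [dworkPhi, Polynomial.lsum_apply]
    rw [Polynomial.sum_over_range' _ (fun n => by simp) (N+1)
      (by rw [natDegree_map_eq_of_injective (C_injective)]; omega)]
    apply Finset.sum_congr rfl
    intro n _
    rw [coeff_map, LinearMap.toSpanSingleton_apply]
  obtain ⟨r, hr⟩ := h
  have hmul : algebraMap (Polynomial k) (Localization.Away (X : Polynomial k)) (X^(N+1) * r)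
      = algebraMap (Polynomial k) _ (∑ n ∈ Finset.range (N+1),
          C (b.coeff n) * ((-1 : Polynomial k)^n * (n.factorial : Polynomial k) * X^(N-n))) := by
    rw [map_mul, map_sum]
    have hr' : algebraMap (Polynomial k) (Localization.Away (X : Polynomial k)) r
        = ∑ n ∈ Finset.range (N+1), (C (b.coeff n) : Polynomial k) • dworkC k n := by
      rw [← hexp, ← hr]; rfl
    rw [hr', Finset.mul_sum]
    apply Finset.sum_congr rfl
    intro n hn
    have hn' : n ≤ N := Nat.lt_succ_iff.mp (Finset.mem_range.mp hn)
    rw [Algebra.smul_def, mul_left_comm, Xpow_mul_c k n N hn', ← map_mul]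
  have heq : (X : Polynomial k)^(N+1) * r = ∑ n ∈ Finset.range (N+1),
      C (b.coeff n) * ((-1 : Polynomial k)^n * (n.factorial : Polynomial k) * X^(N-n)) :=
    algebraMap_loc_injective k hmul
  have hco : ∀ n0, n0 ≤ N → b.coeff n0 = 0 := by
    intro n0 hn0
    have h1 : ((X : Polynomial k)^(N+1) * r).coeff (N - n0) = 0 := by
      rw [mul_comm, coeff_mul_X_pow']
      simp only [if_neg (by omega : ¬ (N+1 ≤ N - n0))]
    rw [heq, finset_sum_coeff] at h1
    have h2 : ∀ n ∈ Finset.range (N+1),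
        (C (b.coeff n) * ((-1 : Polynomial k)^n * (n.factorial : Polynomial k)
          * X^(N-n))).coeff (N - n0)
        = if n = n0 then b.coeff n * ((-1 : k)^n * (n.factorial : k)) else 0 := by
      intro n hn
      have hn' : n ≤ N := Nat.lt_succ_iff.mp (Finset.mem_range.mp hn)
      have hC : C (b.coeff n) * ((-1 : Polynomial k)^n * (n.factorial : Polynomial k) * X^(N-n))
          = C (b.coeff n * ((-1 : k)^n * (n.factorial : k))) * X^(N-n) := by
        simp only [map_mul, map_pow, map_neg, map_one, map_natCast]
        ring
      rw [hC, coeff_C_mul, coeff_X_pow]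
      have hiff : (N - n0 = N - n) ↔ (n = n0) := by omega
      by_cases hc : n = n0
      · rw [if_pos (hiff.mpr hc), if_pos hc, mul_one]
      · rw [if_neg (fun hx => hc (hiff.mp hx)), if_neg hc, mul_zero]
    rw [Finset.sum_congr rfl h2, Finset.sum_ite_eq' (Finset.range (N+1))] at h1
    rw [if_pos (Finset.mem_range.mpr (by omega))] at h1
    have hne : ((-1 : k)^n0 * (n0.factorial : k)) ≠ 0 := by
      apply mul_ne_zero
      · exact pow_ne_zero _ (neg_ne_zero.mpr one_ne_zero)
      · exact Nat.cast_ne_zero.mpr n0.factorial_ne_zero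
    exact (mul_eq_zero.mp h1).resolve_right hne
  ext n
  rcases le_or_gt n N with hn | hn
  · simpa using hco n hn
  · simpa using coeff_eq_zero_of_natDegree_lt hn

end DworkAux

/- STATEMENT 8: de Rham cohomology of D e^{xy} along the fiber direction y
recovers local cohomology at the origin of the line: writing k[x,y] as
P = (k[x])[y], the operator T = ∂_y + x on P has H⁰ = ker T = 0 and
H¹ = coker T ≅ k[x,x⁻¹]/k[x] as k[x]-modules. -/
theorem dwork_xy_fiber_cohomology (k : Type) [Field k] [CharZero k] :
    LinearMap.ker
        ((Polynomial.derivative : Polynomial (Polynomial k) →ₗ[Polynomial k]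
            Polynomial (Polynomial k))
          + LinearMap.mulLeft (Polynomial k) (C (X : Polynomial k))) = ⊥ ∧
    Nonempty
      ((Polynomial (Polynomial k) ⧸ LinearMap.range
          ((Polynomial.derivative : Polynomial (Polynomial k) →ₗ[Polynomial k]
              Polynomial (Polynomial k))
            + LinearMap.mulLeft (Polynomial k) (C (X : Polynomial k))))
        ≃ₗ[Polynomial k]
       (Localization.Away (X : Polynomial k) ⧸ LinearMap.range
          (Algebra.linearMap (Polynomial k) (Localization.Away (X : Polynomial k))))) := by
  constructor
  · exact dworkT_ker k
  · set Rng := LinearMap.range (Algebra.linearMap (Polynomial k)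
      (Localization.Away (X : Polynomial k))) with hRng
    set f := Rng.mkQ.comp (dworkPhi k) with hf
    have hle : LinearMap.range (dworkT k) ≤ LinearMap.ker f := by
      rintro _ ⟨p, rfl⟩
      rw [LinearMap.mem_ker, LinearMap.comp_apply, Submodule.mkQ_apply,
        Submodule.Quotient.mk_eq_zero]
      exact phi_T_mem k p
    have hker : LinearMap.ker f ≤ LinearMap.range (dworkT k) := by
      intro p hp
      obtain ⟨q, b, rfl⟩ := normal_form k p
      have h1 : dworkPhi k (dworkT k q + Polynomial.map (C : k →+* Polynomial k) b) ∈ Rng := by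
        rw [LinearMap.mem_ker, LinearMap.comp_apply, Submodule.mkQ_apply,
          Submodule.Quotient.mk_eq_zero] at hp
        exact hp
      rw [map_add] at h1
      have hb : dworkPhi k (Polynomial.map (C : k →+* Polynomial k) b) ∈ Rng :=
        (Submodule.add_mem_iff_right _ (phi_T_mem k q)).mp h1
      rw [phi_constpoly k b hb, Polynomial.map_zero, add_zero]
      exact ⟨q, rfl⟩
    have hinj : Function.Injective
        ⇑(Submodule.liftQ (LinearMap.range (dworkT k)) f hle) := by
      rw [← LinearMap.ker_eq_bot, Submodule.ker_liftQ_eq_bot]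
      exact hker
    have hsurj : Function.Surjective
        ⇑(Submodule.liftQ (LinearMap.range (dworkT k)) f hle) := by
      rw [← LinearMap.range_eq_top, Submodule.range_liftQ, LinearMap.range_eq_top]
      exact phi_surj k
    exact ⟨LinearEquiv.ofBijective _ ⟨hinj, hsurj⟩⟩
end

section
/- Kashiwara's equivalence for a point in the line: over a field k of characteristic zero, the functor from k-vector spaces to left A_1-modules sending V to k[∂] ⊗_k V (with ∂ acting by multiplication and x by −d/d∂) is fully faithful, and its essential image consists exactly of those A_1-modules M on which every element is annihilated by a power of x. -/
open TensorProduct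

/-- The action of `∂` on `k[∂] ⊗ V`: multiplication by `∂` on the left factor. -/
noncomputable def deltaAct (k : Type) [Field k] (V : Type) [AddCommGroup V] [Module k V] :
    Polynomial k ⊗[k] V →ₗ[k] Polynomial k ⊗[k] V :=
  LinearMap.rTensor V (LinearMap.mulLeft k Polynomial.X)

/-- The action of `x` on `k[∂] ⊗ V`: `-d/d∂` on the left factor. -/
noncomputable def xAct (k : Type) [Field k] (V : Type) [AddCommGroup V] [Module k V] :
    Polynomial k ⊗[k] V →ₗ[k] Polynomial k ⊗[k] V :=
  LinearMap.rTensor V (-(Polynomial.derivative : Polynomial k →ₗ[k] Polynomial k))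

/-! The map `k[∂] ⊗ ker x → M`, `p ⊗ v ↦ p(∂) v`, intertwines `∂` with multiplication by `∂`
and, because `[x, p(∂)] = -p'(∂)` on `ker x`, intertwines `x` with `-d/d∂`. In characteristic zero
`-d/d∂` is surjective and locally nilpotent on `k[∂] ⊗ V` with kernel `1 ⊗ V`, so an induction on
the order of nilpotency (of `x` for surjectivity, of `-d/d∂` for injectivity) shows that this map is
bijective. Full faithfulness rests on the same facts: a morphism commuting with `x` maps
`1 ⊗ V = ker x` into `1 ⊗ W`, and commuting with `∂` it is determined by what it does there. -/

open Polynomial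

namespace Polynomial

@[elab_as_elim]
theorem induction_on_X_mul {R : Type*} [Semiring R] {motive : R[X] → Prop} (p : R[X])
    (C : ∀ a, motive (C a)) (add : ∀ p q, motive p → motive q → motive (p + q))
    (X_mul : ∀ p, motive p → motive (X * p)) : motive p :=
  Polynomial.induction_on p C add fun n a h => by
    rw [pow_succ', ← mul_assoc, ← X_mul_C, mul_assoc]
    exact X_mul _ h

theorem C_tmul {R M : Type*} [CommSemiring R] [AddCommMonoid M] [Module R M] (a : R) (m : M) :
    C a ⊗ₜ[R] m = a • ((1 : R[X]) ⊗ₜ m) := by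
  rw [TensorProduct.smul_tmul', smul_eq_C_mul, mul_one]

variable {k : Type*} [Field k] [CharZero k]

theorem derivative_surjective : Function.Surjective (derivative : k[X] → k[X]) := by
  intro q
  induction q using Polynomial.induction_on' with
  | add p q hp hq =>
    obtain ⟨a, rfl⟩ := hp
    obtain ⟨b, rfl⟩ := hq
    exact ⟨a + b, derivative_add⟩
  | monomial n a =>
    refine ⟨monomial (n + 1) (a / (n + 1)), ?_⟩
    rw [derivative_monomial]
    push_cast
    rw [div_mul_cancel₀ _ (Nat.cast_add_one_ne_zero n)]

theorem exact_algebraLinearMap_derivative :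
    Function.Exact (Algebra.linearMap k k[X]) (derivative : k[X] →ₗ[k] k[X]) := by
  intro p
  refine ⟨fun hp => ⟨p.coeff 0, (eq_C_of_derivative_eq_zero hp).symm⟩, ?_⟩
  rintro ⟨a, rfl⟩
  exact derivative_C

end Polynomial

section WeylAction

variable {k : Type*} [CommRing k] {M : Type*} [AddCommGroup M] [Module k M]
  {ξ δ : Module.End k M}

theorem apply_aeval_eq_neg_aeval_derivative (hweyl : δ ∘ₗ ξ - ξ ∘ₗ δ = LinearMap.id) {v : M}
    (hv : ξ v = 0) (p : k[X]) : ξ (aeval δ p v) = -aeval δ (derivative p) v := by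
  have hξδ : ∀ w, ξ (δ w) = δ (ξ w) - w := fun w => by
    have := LinearMap.congr_fun hweyl w
    simp only [LinearMap.sub_apply, LinearMap.comp_apply, LinearMap.id_apply] at this
    exact (sub_eq_iff_comm.mp this).symm
  induction p using Polynomial.induction_on_X_mul with
  | C a => simp [hv]
  | add p q hp hq => simp only [map_add, LinearMap.add_apply, hp, hq, neg_add]
  | X_mul p ih =>
    simp only [derivative_mul, derivative_X, one_mul, map_add, map_mul, aeval_X,
      Module.End.mul_apply, LinearMap.add_apply, hξδ, ih, map_neg]
    abel

end WeylAction

section PushforwardOfPoint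

variable {k : Type} [Field k] {V W : Type} [AddCommGroup V] [Module k V]
  [AddCommGroup W] [Module k W]

@[simp]
theorem xAct_tmul (p : k[X]) (v : V) : xAct k V (p ⊗ₜ v) = (-derivative p) ⊗ₜ v := rfl

@[simp]
theorem deltaAct_tmul (p : k[X]) (v : V) : deltaAct k V (p ⊗ₜ v) = (X * p) ⊗ₜ v := rfl

theorem exists_pow_xAct_apply_eq_zero (t : k[X] ⊗[k] V) : ∃ n, (xAct k V ^ n) t = 0 := by
  induction t using TensorProduct.induction_on with
  | zero => exact ⟨0, rfl⟩
  | tmul p v =>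
    refine ⟨p.natDegree + 1, ?_⟩
    rw [xAct, LinearMap.rTensor_pow, LinearMap.rTensor_tmul,
      neg_pow (derivative : Module.End k k[X]), Module.End.mul_apply,
      Module.End.pow_apply derivative, iterate_derivative_eq_zero p.natDegree.lt_succ_self,
      map_zero, zero_tmul]
  | add s t hs ht =>
    obtain ⟨m, hm⟩ := hs
    obtain ⟨n, hn⟩ := ht
    refine ⟨m + n, ?_⟩
    rw [map_add, Module.End.pow_map_zero_of_le (m.le_add_right n) hm,
      Module.End.pow_map_zero_of_le (n.le_add_left m) hn, add_zero]

theorem apply_tmul_eq_aeval {M : Type*} [AddCommGroup M] [Module k M] {δ : Module.End k M}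
    {g : k[X] ⊗[k] V →ₗ[k] M} (hg : g ∘ₗ deltaAct k V = δ ∘ₗ g) (p : k[X]) (v : V) :
    g (p ⊗ₜ v) = aeval δ p (g (1 ⊗ₜ v)) := by
  induction p using Polynomial.induction_on_X_mul with
  | C a => rw [C_tmul, map_smul, aeval_C, Module.algebraMap_end_apply]
  | add p q hp hq => simp [add_tmul, hp, hq]
  | X_mul p ih =>
    rw [← deltaAct_tmul, ← LinearMap.comp_apply, hg, LinearMap.comp_apply, ih, map_mul, aeval_X,
      Module.End.mul_apply]

theorem lTensor_comp_deltaAct (f : V →ₗ[k] W) :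
    f.lTensor k[X] ∘ₗ deltaAct k V = deltaAct k W ∘ₗ f.lTensor k[X] := by
  ext; simp

variable [CharZero k]

theorem xAct_surjective : Function.Surjective (xAct k V) :=
  LinearMap.rTensor_surjective V fun q =>
    let ⟨p, hp⟩ := derivative_surjective (-q)
    ⟨p, by simp [hp]⟩

theorem exists_eq_one_tmul_of_xAct_eq_zero {t : k[X] ⊗[k] V} (ht : xAct k V t = 0) :
    ∃ v, t = 1 ⊗ₜ v := by
  obtain ⟨s, rfl⟩ := (Module.Flat.rTensor_exact V exact_algebraLinearMap_derivative t).1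
    (by simpa [xAct] using ht)
  refine ⟨TensorProduct.lid k V s, ?_⟩
  clear ht
  induction s using TensorProduct.induction_on with
  | zero => simp
  | tmul a v => simp [C_tmul]
  | add s s' hs hs' => simp [hs, hs', tmul_add]

end PushforwardOfPoint

section FullyFaithful

variable {k : Type} [Field k] [CharZero k] {V W : Type} [AddCommGroup V] [Module k V]
  [AddCommGroup W] [Module k W]

theorem existsUnique_eq_lTensor {g : k[X] ⊗[k] V →ₗ[k] k[X] ⊗[k] W}
    (hx : g ∘ₗ xAct k V = xAct k W ∘ₗ g) (hd : g ∘ₗ deltaAct k V = deltaAct k W ∘ₗ g) :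
    ∃! f : V →ₗ[k] W, g = LinearMap.lTensor k[X] f := by
  let ε : k[X] ⊗[k] W →ₗ[k] W := TensorProduct.lid k W ∘ₗ (lcoeff k 0).rTensor W
  have hε (w : W) : ε (1 ⊗ₜ w) = w := by simp [ε]
  refine ⟨ε ∘ₗ g ∘ₗ TensorProduct.mk k k[X] V 1, ?_, fun f hf => ?_⟩
  · have hg_one (v : V) : g (1 ⊗ₜ v) = 1 ⊗ₜ ε (g (1 ⊗ₜ v)) := by
      obtain ⟨w, hw⟩ := exists_eq_one_tmul_of_xAct_eq_zero (t := g (1 ⊗ₜ v))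
        (by rw [← LinearMap.comp_apply, ← hx]; simp)
      rw [hw, hε]
    refine TensorProduct.ext' fun p v => ?_
    rw [apply_tmul_eq_aeval hd, apply_tmul_eq_aeval (lTensor_comp_deltaAct _), hg_one]
    rfl
  · ext v
    simp [hf, hε]

end FullyFaithful

section EssentialImage

variable {k : Type} [Field k] {M : Type} [AddCommGroup M] [Module k M] {ξ δ : Module.End k M}

variable (ξ δ) in
noncomputable def kashiwaraCounit : k[X] ⊗[k] LinearMap.ker ξ →ₗ[k] M :=
  TensorProduct.lift (aeval δ).toLinearMap ∘ₗ (LinearMap.ker ξ).subtype.lTensor k[X]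

@[simp]
theorem kashiwaraCounit_tmul (p : k[X]) (v : LinearMap.ker ξ) :
    kashiwaraCounit ξ δ (p ⊗ₜ v) = aeval δ p (v : M) := rfl

theorem kashiwaraCounit_deltaAct (t : k[X] ⊗[k] LinearMap.ker ξ) :
    kashiwaraCounit ξ δ (deltaAct k _ t) = δ (kashiwaraCounit ξ δ t) := by
  induction t using TensorProduct.induction_on with
  | zero => simp
  | tmul p v => simp [Module.End.mul_apply]
  | add s t hs ht => simp only [map_add, hs, ht]

theorem kashiwaraCounit_xAct (hweyl : δ ∘ₗ ξ - ξ ∘ₗ δ = LinearMap.id)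
    (t : k[X] ⊗[k] LinearMap.ker ξ) :
    kashiwaraCounit ξ δ (xAct k _ t) = ξ (kashiwaraCounit ξ δ t) := by
  induction t using TensorProduct.induction_on with
  | zero => simp
  | tmul p v => simp [apply_aeval_eq_neg_aeval_derivative hweyl v.2]
  | add s t hs ht => simp only [map_add, hs, ht]

variable [CharZero k]

theorem kashiwaraCounit_injective (hweyl : δ ∘ₗ ξ - ξ ∘ₗ δ = LinearMap.id) :
    Function.Injective (kashiwaraCounit ξ δ) := by
  refine (injective_iff_map_eq_zero _).2 fun t ht => ?_
  obtain ⟨n, hn⟩ := exists_pow_xAct_apply_eq_zero t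
  induction n generalizing t with
  | zero => simpa using hn
  | succ n ih =>
    have hxt : xAct k _ t = 0 :=
      ih _ (by rw [kashiwaraCounit_xAct hweyl, ht, map_zero])
        (by rwa [← Module.End.mul_apply, ← pow_succ])
    obtain ⟨v, rfl⟩ := exists_eq_one_tmul_of_xAct_eq_zero hxt
    have hv : v = 0 := by simpa using ht
    rw [hv, tmul_zero]

theorem kashiwaraCounit_surjective (hweyl : δ ∘ₗ ξ - ξ ∘ₗ δ = LinearMap.id)
    (hnil : ∀ m : M, ∃ n : ℕ, (ξ ^ n) m = 0) : Function.Surjective (kashiwaraCounit ξ δ) := by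
  intro m
  obtain ⟨n, hn⟩ := hnil m
  induction n generalizing m with
  | zero => exact ⟨0, by simpa using hn.symm⟩
  | succ n ih =>
    obtain ⟨t, ht⟩ := ih (ξ m) (by rwa [← Module.End.mul_apply, ← pow_succ])
    obtain ⟨s, rfl⟩ := xAct_surjective t
    have hker : m - kashiwaraCounit ξ δ s ∈ LinearMap.ker ξ := by
      rw [LinearMap.mem_ker, map_sub, ← kashiwaraCounit_xAct hweyl, ht, sub_self]
    exact ⟨s + 1 ⊗ₜ ⟨_, hker⟩, by simp⟩

end EssentialImage

theorem kashiwara_point_in_line (k : Type) [Field k] [CharZero k] :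
    (∀ (V W : Type) [AddCommGroup V] [Module k V] [AddCommGroup W] [Module k W]
        (g : Polynomial k ⊗[k] V →ₗ[k] Polynomial k ⊗[k] W),
      g ∘ₗ xAct k V = xAct k W ∘ₗ g →
      g ∘ₗ deltaAct k V = deltaAct k W ∘ₗ g →
      ∃! f : V →ₗ[k] W, g = LinearMap.lTensor (Polynomial k) f) ∧
    (∀ (M : Type) [AddCommGroup M] [Module k M] (ξ δ : M →ₗ[k] M),
      δ ∘ₗ ξ - ξ ∘ₗ δ = LinearMap.id →
      (∀ m : M, ∃ n : ℕ, (ξ ^ n) m = 0) →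
      ∃ e : M ≃ₗ[k] Polynomial k ⊗[k] (LinearMap.ker ξ),
        (∀ m, e (ξ m) = xAct k (LinearMap.ker ξ) (e m)) ∧
        (∀ m, e (δ m) = deltaAct k (LinearMap.ker ξ) (e m))) := by
  refine ⟨fun V W _ _ _ _ g hx hd => existsUnique_eq_lTensor hx hd,
    fun M _ _ ξ δ hweyl hnil => ?_⟩
  let e := LinearEquiv.ofBijective (kashiwaraCounit ξ δ)
    ⟨kashiwaraCounit_injective hweyl, kashiwaraCounit_surjective hweyl hnil⟩
  refine ⟨e.symm, fun m => e.injective ?_, fun m => e.injective ?_⟩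
  · rw [e.apply_symm_apply]
    exact ((kashiwaraCounit_xAct hweyl _).trans (congrArg ξ (e.apply_symm_apply m))).symm
  · rw [e.apply_symm_apply]
    exact ((kashiwaraCounit_deltaAct _).trans (congrArg δ (e.apply_symm_apply m))).symm
end

section
/- Let k have characteristic zero, s ∈ k[x_1,…,x_n] a nonzero polynomial, and F = s·y ∈ k[x_1,…,x_n,y]. Then the kernel of the operator ∂/∂y + s on k[x_1,…,x_n,y] is zero, and its cokernel is isomorphic, as a k[x_1,…,x_n]-module, to k[x_1,…,x_n][1/s] / k[x_1,…,x_n]. -/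
open Polynomial nonZeroDivisors
open scoped Nat

/-! Over `A = R[1/s]` the operator `∂ + s` on `A[y]` is bijective: `s` is a unit there, and if
`∂ p = (∂ + s) r` then `p = (∂ + s) (s⁻¹ (p - r))`, so local nilpotence of `∂` gives surjectivity.
Taking the constant coefficient of the preimage defines an `R`-linear "residue" `R[y] → A`,
`y ^ m ↦ (-1) ^ m m! / s ^ (m + 1)`, sending `(∂ + s) q` to `q(0) ∈ R`; as `m!` is invertible it is
onto `A / R`. Conversely, if the preimage `Q` of `p` has `Q(0) ∈ R`, the recursion
`(m + 1) Q_{m+1} = p_m - s Q_m` puts every coefficient of `Q` in `R`, so `p ∈ (∂ + s) R[y]`. -/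

theorem isUnit_natCast_of_ne_zero {R : Type*} [Semiring R] [Algebra ℚ R] {n : ℕ} (hn : n ≠ 0) :
    IsUnit (n : R) := by
  simpa using ((Nat.cast_ne_zero (R := ℚ)).mpr hn).isUnit.map (algebraMap ℚ R)

namespace Polynomial

section TwistedDerivative

variable {R : Type*} [CommRing R]

noncomputable def twistedDerivative (s : R) : R[X] →ₗ[R] R[X] :=
  derivative + LinearMap.mulLeft R (C s)

@[simp]
theorem twistedDerivative_apply (s : R) (p : R[X]) :
    twistedDerivative s p = derivative p + C s * p :=
  rfl

theorem coeff_twistedDerivative (s : R) (p : R[X]) (m : ℕ) :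
    (twistedDerivative s p).coeff m = p.coeff (m + 1) * (m + 1) + s * p.coeff m := by
  simp [coeff_derivative]

theorem map_twistedDerivative {S : Type*} [CommRing S] (f : R →+* S) (s : R) (p : R[X]) :
    (twistedDerivative s p).map f = twistedDerivative (f s) (p.map f) := by
  simp [derivative_map]

theorem ker_twistedDerivative_eq_bot {s : R} (hs : s ∈ R⁰) :
    LinearMap.ker (twistedDerivative s) = ⊥ := by
  refine LinearMap.ker_eq_bot'.mpr fun p hp => ?_
  have h := congrArg (coeff · p.natDegree) hp
  simp only [coeff_twistedDerivative, coeff_eq_zero_of_natDegree_lt p.natDegree.lt_succ_self,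
    zero_mul, zero_add, coeff_zero] at h
  exact leadingCoeff_eq_zero.mp ((mul_left_mem_nonZeroDivisors_eq_zero_iff hs).mp h)

theorem twistedDerivative_surjective {u : R} (hu : IsUnit u) :
    Function.Surjective (twistedDerivative u) := by
  obtain ⟨v, hvu⟩ := hu.exists_left_inv
  suffices ∀ n (p : R[X]), derivative^[n] p = 0 → ∃ q, twistedDerivative u q = p from
    fun p => this _ p (iterate_derivative_eq_zero p.natDegree.lt_succ_self)
  intro n
  induction n with
  | zero => exact fun p hp => ⟨0, by simp_all⟩
  | succ n ih =>
    intro p hp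
    obtain ⟨r, hr⟩ := ih (derivative p) hp
    refine ⟨C v * (p - r), ?_⟩
    have hCvu : C v * C u = 1 := by rw [← C_mul, hvu, C_1]
    simp only [twistedDerivative_apply, derivative_C_mul, derivative_sub] at hr ⊢
    linear_combination (-C v) * hr + p * hCvu

theorem twistedDerivative_bijective {u : R} (hu : IsUnit u) :
    Function.Bijective (twistedDerivative u) :=
  ⟨LinearMap.ker_eq_bot.mp (ker_twistedDerivative_eq_bot hu.mem_nonZeroDivisors),
    twistedDerivative_surjective hu⟩

theorem lifts_of_twistedDerivative_mem_lifts [Algebra ℚ R] {S : Type*} [CommRing S] {f : R →+* S}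
    {s : R} {Q : S[X]} (hL : twistedDerivative (f s) Q ∈ lifts f)
    (h0 : Q.coeff 0 ∈ Set.range f) : Q ∈ lifts f := by
  rw [lifts_iff_coeff_lifts] at hL ⊢
  intro m
  induction m with
  | zero => exact h0
  | succ m ih =>
    obtain ⟨a, ha⟩ := hL m
    obtain ⟨b, hb⟩ := ih
    obtain ⟨c, hc⟩ := (isUnit_natCast_of_ne_zero (R := R) m.succ_ne_zero).exists_left_inv
    refine ⟨c * (a - s * b), ?_⟩
    have hfc : f c * (m + 1) = 1 := by simpa using congrArg f hc
    rw [coeff_twistedDerivative] at ha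
    rw [map_mul, map_sub, map_mul, ha, hb]
    linear_combination Q.coeff (m + 1) * hfc

noncomputable def twistedDerivativeEquiv {u : R} (hu : IsUnit u) : R[X] ≃ₗ[R] R[X] :=
  LinearEquiv.ofBijective _ (twistedDerivative_bijective hu)

end TwistedDerivative

section Away

variable {R : Type*} [CommRing R] (A : Type*) [CommRing A] [Algebra R A] (s : R)
  [IsLocalization.Away s A]

noncomputable def twistedDerivativeInv : R[X] →ₗ[R] A[X] :=
  ((twistedDerivativeEquiv (IsLocalization.Away.algebraMap_isUnit (S := A) s)).symm.restrictScalars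
    R).toLinearMap ∘ₗ (mapAlg R A).toLinearMap

theorem twistedDerivative_twistedDerivativeInv (p : R[X]) :
    twistedDerivative (algebraMap R A s) (twistedDerivativeInv A s p) = p.map (algebraMap R A) :=
  (twistedDerivativeEquiv (IsLocalization.Away.algebraMap_isUnit s)).apply_symm_apply _

theorem twistedDerivativeInv_twistedDerivative (q : R[X]) :
    twistedDerivativeInv A s (twistedDerivative s q) = q.map (algebraMap R A) :=
  (twistedDerivativeEquiv (IsLocalization.Away.algebraMap_isUnit s)).symm_apply_eq.mpr
    (map_twistedDerivative _ _ _)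

noncomputable def twistedResidue : R[X] →ₗ[R] A :=
  (lcoeff A 0).restrictScalars R ∘ₗ twistedDerivativeInv A s

theorem twistedResidue_apply (p : R[X]) :
    twistedResidue A s p = (twistedDerivativeInv A s p).coeff 0 :=
  rfl

theorem twistedResidue_twistedDerivative (q : R[X]) :
    twistedResidue A s (twistedDerivative s q) = algebraMap R A (q.coeff 0) := by
  rw [twistedResidue_apply, twistedDerivativeInv_twistedDerivative, coeff_map]

theorem algebraMap_mul_twistedResidue_one : algebraMap R A s * twistedResidue A s 1 = 1 := by
  have h := twistedResidue_twistedDerivative A s 1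
  rwa [twistedDerivative_apply, derivative_one, zero_add, ← smul_eq_C_mul, map_smul,
    Algebra.smul_def, coeff_one_zero, map_one (algebraMap R A)] at h

theorem algebraMap_mul_twistedResidue_X_pow_succ (m : ℕ) :
    algebraMap R A s * twistedResidue A s (X ^ (m + 1)) = -(m + 1) * twistedResidue A s (X ^ m) := by
  have hL : twistedDerivative s (X ^ (m + 1)) = ((m + 1 : ℕ) : R) • X ^ m + s • X ^ (m + 1) := by
    simp [smul_eq_C_mul]
  have h := twistedResidue_twistedDerivative A s (X ^ (m + 1))
  rw [hL, map_add, map_smul, map_smul, Algebra.smul_def, Algebra.smul_def, coeff_X_pow,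
    if_neg m.succ_ne_zero.symm, map_zero] at h
  push_cast at h
  linear_combination h

theorem algebraMap_pow_mul_twistedResidue_X_pow (m : ℕ) :
    algebraMap R A s ^ (m + 1) * twistedResidue A s (X ^ m) = (-1) ^ m * m ! := by
  induction m with
  | zero => simpa using algebraMap_mul_twistedResidue_one A s
  | succ m ih =>
    rw [pow_succ, mul_assoc, algebraMap_mul_twistedResidue_X_pow_succ]
    push_cast [Nat.factorial_succ]
    linear_combination (-(m + 1 : A)) * ih

variable [Algebra ℚ R]

theorem exists_twistedResidue_eq_add_algebraMap (a : A) :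
    ∃ p r, twistedResidue A s p = a + algebraMap R A r := by
  obtain ⟨e, r, hr⟩ := IsLocalization.Away.surj s a
  cases e with
  | zero => exact ⟨0, -r, by simp_all⟩
  | succ m =>
    obtain ⟨c, hc⟩ := ((isUnit_neg_one.pow m).mul
      (isUnit_natCast_of_ne_zero (R := R) m.factorial_ne_zero)).exists_left_inv
    refine ⟨(c * r) • X ^ m, 0, ?_⟩
    apply ((IsLocalization.Away.algebraMap_isUnit s).pow (m + 1)).mul_left_cancel
    have hc' : algebraMap R A c * ((-1) ^ m * m !) = 1 := by simpa using congrArg (algebraMap R A) hc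
    rw [map_zero, add_zero, map_smul, Algebra.smul_def, mul_left_comm,
      algebraMap_pow_mul_twistedResidue_X_pow, mul_comm _ a, hr, map_mul]
    linear_combination algebraMap R A r * hc'

theorem twistedDerivativeInv_mem_lifts {p : R[X]}
    (h : twistedResidue A s p ∈ Set.range (algebraMap R A)) :
    twistedDerivativeInv A s p ∈ lifts (algebraMap R A) :=
  lifts_of_twistedDerivative_mem_lifts
    (by rw [twistedDerivative_twistedDerivativeInv]; exact (mem_lifts _).mpr ⟨p, rfl⟩) h

theorem mem_range_twistedDerivative_of_twistedResidue_mem_range (hs : s ∈ R⁰) {p : R[X]}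
    (h : twistedResidue A s p ∈ Set.range (algebraMap R A)) :
    p ∈ LinearMap.range (twistedDerivative s) := by
  obtain ⟨q, hq⟩ := (mem_lifts _).mp (twistedDerivativeInv_mem_lifts A s h)
  refine ⟨q, map_injective _ (IsLocalization.injective A (Submonoid.powers_le.mpr hs)) ?_⟩
  rw [map_twistedDerivative, hq, twistedDerivative_twistedDerivativeInv]

theorem ker_mkQ_comp_twistedResidue (hs : s ∈ R⁰) :
    LinearMap.ker ((LinearMap.range (Algebra.linearMap R A)).mkQ ∘ₗ twistedResidue A s) =
      LinearMap.range (twistedDerivative s) := by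
  ext p
  simp only [LinearMap.mem_ker, LinearMap.comp_apply, Submodule.mkQ_apply,
    Submodule.Quotient.mk_eq_zero, LinearMap.mem_range, Algebra.linearMap_apply]
  constructor
  · exact mem_range_twistedDerivative_of_twistedResidue_mem_range A s hs
  · rintro ⟨q, rfl⟩
    exact ⟨q.coeff 0, (twistedResidue_twistedDerivative A s q).symm⟩

theorem mkQ_comp_twistedResidue_surjective :
    Function.Surjective ((LinearMap.range (Algebra.linearMap R A)).mkQ ∘ₗ twistedResidue A s) := by
  intro x
  obtain ⟨a, rfl⟩ := Submodule.mkQ_surjective _ x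
  obtain ⟨p, r, hp⟩ := exists_twistedResidue_eq_add_algebraMap A s a
  refine ⟨p, (Submodule.Quotient.eq _).mpr ⟨r, ?_⟩⟩
  simp [hp]

noncomputable def cokernelTwistedDerivativeEquiv (hs : s ∈ R⁰) :
    (R[X] ⧸ LinearMap.range (twistedDerivative s)) ≃ₗ[R]
      (A ⧸ LinearMap.range (Algebra.linearMap R A)) :=
  (Submodule.quotEquivOfEq _ _ (ker_mkQ_comp_twistedResidue A s hs).symm).trans
    (LinearMap.quotKerEquivOfSurjective _ (mkQ_comp_twistedResidue_surjective A s))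

end Away

end Polynomial

theorem dwork_rank_one (k : Type) [Field k] [CharZero k] (n : ℕ)
    (s : MvPolynomial (Fin n) k) (hs : s ≠ 0) :
    LinearMap.ker
        ((Polynomial.derivative : Polynomial (MvPolynomial (Fin n) k)
            →ₗ[MvPolynomial (Fin n) k] Polynomial (MvPolynomial (Fin n) k))
          + LinearMap.mulLeft (MvPolynomial (Fin n) k) (C s)) = ⊥ ∧
    Nonempty
      ((Polynomial (MvPolynomial (Fin n) k) ⧸ LinearMap.range
          ((Polynomial.derivative : Polynomial (MvPolynomial (Fin n) k)
              →ₗ[MvPolynomial (Fin n) k] Polynomial (MvPolynomial (Fin n) k))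
            + LinearMap.mulLeft (MvPolynomial (Fin n) k) (C s)))
        ≃ₗ[MvPolynomial (Fin n) k]
       (Localization.Away s ⧸ LinearMap.range
          (Algebra.linearMap (MvPolynomial (Fin n) k) (Localization.Away s)))) :=
  ⟨ker_twistedDerivative_eq_bot (mem_nonZeroDivisors_of_ne_zero hs),
    ⟨cokernelTwistedDerivativeEquiv _ s (mem_nonZeroDivisors_of_ne_zero hs)⟩⟩
end

section
/- The cokernel isomorphism in the rank-one Dwork comparison is explicitly given by sending the class of x^α y^m to the class of (−1)^m m! / s^{m+1} · x^α in k[x][1/s]/k[x]: this assignment is well defined on coker(∂_y + s), k[x]-linear, and bijective. -/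
/-!
Writing `u = 1/s`, the map `φ : g yᵐ ↦ (-1)ᵐ m! g uᵐ⁺¹` is `p ↦ ∫_{-∞}^0 p(y) e^{sy} dy`, so
integration by parts gives `φ (p' + s p) = p(0) ∈ R` and `φ` descends to the cokernels. It is
onto `R[1/s]` because the factorials are units. For injectivity, if `φ p ∈ R` with `deg p ≤ N`,
multiplying by `s^{N+1}` shows `s ∣ N! p_N`, hence `p_N = s q`, and `p - (∂_y + s)(q yᴺ)` has
smaller degree.
-/

open Polynomial

namespace DworkRankOne

variable {R : Type*} [CommRing R] (s : R)

local notation "L" => Localization.Away s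
local notation "u" => IsLocalization.Away.invSelf (S := Localization.Away s) s

noncomputable def twistedDerivative : R[X] →ₗ[R] R[X] :=
  derivative + LinearMap.mulLeft R (C s)

noncomputable def dworkCoeff (m : ℕ) : L :=
  (-1) ^ m * m.factorial * u ^ (m + 1)

noncomputable def dworkMap : R[X] →ₗ[R] L :=
  lsum fun m => LinearMap.toSpanSingleton R L (dworkCoeff s m)

lemma algebraMap_pow_mul_invSelf_pow (k : ℕ) : algebraMap R L s ^ k * u ^ k = 1 := by
  rw [← mul_pow, IsLocalization.Away.mul_invSelf, one_pow]

lemma dworkMap_monomial (m : ℕ) (g : R) :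
    dworkMap s (monomial m g) = algebraMap R L g * dworkCoeff s m := by
  rw [dworkMap, lsum_apply, sum_monomial_index _ _ (by simp), LinearMap.toSpanSingleton_apply,
    Algebra.smul_def]

lemma dworkMap_monomial_eq_mk (m : ℕ) (g : R) :
    dworkMap s (monomial m g) =
      Localization.mk ((-1) ^ m * m.factorial * g)
        (⟨s ^ (m + 1), m + 1, rfl⟩ : Submonoid.powers s) := by
  rw [Localization.mk_eq_mk', eq_comm, IsLocalization.mk'_eq_iff_eq_mul, dworkMap_monomial,
    dworkCoeff]
  simp only [map_mul, map_pow, map_neg, map_one, map_natCast]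
  linear_combination (-((-1) ^ m * m.factorial * algebraMap R L g)) *
    algebraMap_pow_mul_invSelf_pow s (m + 1)

lemma twistedDerivative_monomial (m : ℕ) (g : R) :
    twistedDerivative s (monomial m g) = monomial (m - 1) (g * m) + monomial m (s * g) := by
  rw [twistedDerivative, LinearMap.add_apply, LinearMap.mulLeft_apply, derivative_monomial,
    C_mul_monomial]

lemma dworkMap_twistedDerivative (p : R[X]) :
    dworkMap s (twistedDerivative s p) = algebraMap R L (p.coeff 0) := by
  have hu := algebraMap_pow_mul_invSelf_pow s 1
  induction p using Polynomial.induction_on' with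
  | add p q hp hq => rw [map_add, map_add, hp, hq, coeff_add, map_add]
  | monomial m g =>
    rw [twistedDerivative_monomial, map_add, dworkMap_monomial, dworkMap_monomial, dworkCoeff,
      dworkCoeff, coeff_monomial]
    cases m with
    | zero =>
      simp only [Nat.cast_zero, mul_zero, map_zero, zero_mul, zero_add, map_mul, ↓reduceIte]
      linear_combination algebraMap R L g * hu
    | succ j =>
      simp only [Nat.add_sub_cancel, Nat.factorial_succ, map_mul, map_natCast, Nat.cast_mul,
        if_neg (Nat.succ_ne_zero j), map_zero]
      push_cast
      linear_combination
        (algebraMap R L g * (-1) ^ (j + 1) * (j + 1) * j.factorial * u ^ (j + 1)) * hu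

lemma degree_sub_twistedDerivative_monomial_lt {p : R[X]} {N : ℕ} {q : R}
    (hp : p.degree < ↑(N + 1)) (hq : p.coeff N = s * q) :
    (p - twistedDerivative s (monomial N q)).degree < N := by
  rw [degree_lt_iff_coeff_zero]
  intro m hm
  rw [coeff_sub, twistedDerivative_monomial, coeff_add, coeff_monomial, coeff_monomial]
  rcases hm.eq_or_lt with rfl | hlt
  · rw [if_pos rfl, hq]
    split_ifs with hN
    · obtain rfl : N = 0 := by omega
      simp
    · simp
  · rw [if_neg (by omega), if_neg hlt.ne, (degree_lt_iff_coeff_zero p _).mp hp m hlt]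
    simp

lemma pow_smul_dworkCoeff {m N : ℕ} (h : m ≤ N) :
    s ^ (N + 1) • dworkCoeff s m = algebraMap R L ((-1) ^ m * m.factorial * s ^ (N - m)) := by
  obtain ⟨k, rfl⟩ := Nat.exists_eq_add_of_le h
  rw [Nat.add_sub_cancel_left, Algebra.smul_def, dworkCoeff]
  simp only [map_mul, map_pow, map_neg, map_one, map_natCast]
  linear_combination
    ((-1) ^ m * m.factorial * algebraMap R L s ^ k) * algebraMap_pow_mul_invSelf_pow s (m + 1)

lemma pow_smul_dworkMap {p : R[X]} {N : ℕ} (hp : p.natDegree ≤ N) :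
    s ^ (N + 1) • dworkMap s p = algebraMap R L
      (∑ m ∈ Finset.range (N + 1), p.coeff m * ((-1) ^ m * m.factorial * s ^ (N - m))) := by
  conv_lhs => rw [p.as_sum_range' (N + 1) (Nat.lt_succ_of_le hp)]
  simp only [map_sum, Finset.smul_sum, dworkMap_monomial, ← Algebra.smul_def,
    smul_comm (s ^ (N + 1))]
  refine Finset.sum_congr rfl fun m hm => ?_
  rw [pow_smul_dworkCoeff s (Nat.lt_succ_iff.mp (Finset.mem_range.mp hm)), Algebra.smul_def,
    ← map_mul]


lemma isUnit_neg_one_pow_mul_factorial [Algebra ℚ R] (m : ℕ) :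
    IsUnit ((-1) ^ m * m.factorial : R) :=
  (isUnit_neg_one.pow m).mul <| by
    simpa using (IsUnit.mk0 (m.factorial : ℚ) (by positivity)).map (algebraMap ℚ R)

variable {s}

lemma dvd_coeff_of_dworkMap_mem_range [Algebra ℚ R] (hs : s ∈ nonZeroDivisors R) {p : R[X]}
    {N : ℕ} (hp : p.natDegree ≤ N)
    (h : dworkMap s p ∈ LinearMap.range (Algebra.linearMap R L)) : s ∣ p.coeff N := by
  obtain ⟨a, ha⟩ := h
  have hinj : Function.Injective (algebraMap R L) :=
    IsLocalization.injective L (Submonoid.powers_le.mpr hs)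
  have hsum := hinj <| (pow_smul_dworkMap s hp).symm.trans <| by
    rw [← ha, Algebra.linearMap_apply, Algebra.smul_def, ← map_mul]
  rw [Finset.sum_range_succ, Nat.sub_self, pow_zero, mul_one] at hsum
  have hlow : s ∣ ∑ m ∈ Finset.range N, p.coeff m * ((-1) ^ m * m.factorial * s ^ (N - m)) :=
    Finset.dvd_sum fun m hm => Dvd.dvd.mul_left
      ((dvd_pow_self s (Nat.sub_ne_zero_of_lt (Finset.mem_range.mp hm))).mul_left _) _
  have htop : s ∣ p.coeff N * ((-1) ^ N * N.factorial) := by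
    rw [eq_sub_of_add_eq' hsum]
    exact dvd_sub (dvd_mul_of_dvd_left (dvd_pow_self s N.succ_ne_zero) a) hlow
  exact (isUnit_neg_one_pow_mul_factorial N).dvd_mul_right.mp htop

lemma mem_range_twistedDerivative [Algebra ℚ R] (hs : s ∈ nonZeroDivisors R) {p : R[X]}
    (h : dworkMap s p ∈ LinearMap.range (Algebra.linearMap R L)) :
    p ∈ LinearMap.range (twistedDerivative s) := by
  suffices key : ∀ N : ℕ, ∀ p : R[X], p.degree < N →
      dworkMap s p ∈ LinearMap.range (Algebra.linearMap R L) →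
      p ∈ LinearMap.range (twistedDerivative s) from
    key _ p ((degree_lt_iff_coeff_zero p _).mpr fun m hm => coeff_eq_zero_of_natDegree_lt hm) h
  intro N
  induction N with
  | zero =>
    intro p hp _
    obtain rfl : p = 0 := Polynomial.ext fun m => by
      simpa using (degree_lt_iff_coeff_zero p 0).mp hp m m.zero_le
    exact zero_mem _
  | succ N ih =>
    intro p hp h
    obtain ⟨q, hq⟩ := dvd_coeff_of_dworkMap_mem_range hs
      (natDegree_le_iff_coeff_eq_zero.mpr fun m hm => (degree_lt_iff_coeff_zero p _).mp hp m hm) h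
    have hdeg := degree_sub_twistedDerivative_monomial_lt s hp hq
    have hmem : dworkMap s (p - twistedDerivative s (monomial N q)) ∈
        LinearMap.range (Algebra.linearMap R L) := by
      rw [map_sub, dworkMap_twistedDerivative]
      exact sub_mem h ⟨_, rfl⟩
    obtain ⟨r, hr⟩ := ih _ hdeg hmem
    exact ⟨monomial N q + r, by rw [map_add, hr, add_sub_cancel]⟩

lemma ker_mkQ_comp_dworkMap [Algebra ℚ R] (hs : s ∈ nonZeroDivisors R) :
    LinearMap.ker ((LinearMap.range (Algebra.linearMap R L)).mkQ ∘ₗ dworkMap s) =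
      LinearMap.range (twistedDerivative s) := by
  ext p
  simp only [LinearMap.mem_ker, LinearMap.comp_apply, Submodule.mkQ_apply,
    Submodule.Quotient.mk_eq_zero]
  refine ⟨mem_range_twistedDerivative hs, ?_⟩
  rintro ⟨q, rfl⟩
  rw [dworkMap_twistedDerivative]
  exact ⟨_, rfl⟩

variable (s) in
lemma dworkMap_surjective [Algebra ℚ R] : Function.Surjective (dworkMap s) := by
  intro z
  obtain ⟨n, a, hz⟩ := IsLocalization.Away.surj s z
  obtain ⟨v, hv⟩ := (isUnit_neg_one_pow_mul_factorial (R := R) n).exists_left_inv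
  refine ⟨monomial n (v * a * s), ?_⟩
  have hv' := congrArg (algebraMap R L) hv
  rw [dworkMap_monomial, dworkCoeff]
  simp only [map_mul, map_pow, map_neg, map_one, map_natCast] at hv' ⊢
  linear_combination (algebraMap R L a * algebraMap R L s * u ^ (n + 1)) * hv' +
    (algebraMap R L a * u ^ n) * algebraMap_pow_mul_invSelf_pow s 1 - u ^ n * hz +
    z * algebraMap_pow_mul_invSelf_pow s n

noncomputable def dworkEquiv [Algebra ℚ R] (hs : s ∈ nonZeroDivisors R) :
    (R[X] ⧸ LinearMap.range (twistedDerivative s)) ≃ₗ[R]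
      (L ⧸ LinearMap.range (Algebra.linearMap R L)) :=
  (Submodule.quotEquivOfEq _ _ (ker_mkQ_comp_dworkMap hs).symm).trans
    (LinearMap.quotKerEquivOfSurjective _
      ((Submodule.mkQ_surjective _).comp (dworkMap_surjective s)))

lemma dworkEquiv_mk [Algebra ℚ R] (hs : s ∈ nonZeroDivisors R) (p : R[X]) :
    dworkEquiv hs (Submodule.Quotient.mk p) = Submodule.Quotient.mk (dworkMap s p) :=
  rfl

end DworkRankOne

open DworkRankOne

theorem dwork_rank_one_explicit (k : Type) [Field k] [CharZero k] (n : ℕ)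
    (s : MvPolynomial (Fin n) k) (hs : s ≠ 0) :
    ∃ e : (Polynomial (MvPolynomial (Fin n) k) ⧸ LinearMap.range
          ((Polynomial.derivative : Polynomial (MvPolynomial (Fin n) k)
              →ₗ[MvPolynomial (Fin n) k] Polynomial (MvPolynomial (Fin n) k))
            + LinearMap.mulLeft (MvPolynomial (Fin n) k) (C s)))
        ≃ₗ[MvPolynomial (Fin n) k]
        (Localization.Away s ⧸ LinearMap.range
          (Algebra.linearMap (MvPolynomial (Fin n) k) (Localization.Away s))),
      ∀ (g : MvPolynomial (Fin n) k) (m : ℕ),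
        e (Submodule.Quotient.mk (C g * X ^ m)) =
          Submodule.Quotient.mk
            (Localization.mk ((-1) ^ m * (m.factorial : MvPolynomial (Fin n) k) * g)
              (⟨s ^ (m + 1), ⟨m + 1, rfl⟩⟩ : Submonoid.powers s)) := by
  refine ⟨dworkEquiv (mem_nonZeroDivisors_of_ne_zero hs), fun g m => ?_⟩
  rw [C_mul_X_pow_eq_monomial, ← dworkMap_monomial_eq_mk]
  exact dworkEquiv_mk _ _
end
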